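/- If (Q_1, Q_2) is a 2-colouring of the hypergraph (Q, S), then the sets W(p_1) = {v}, W(p_2) = {q*, u_1, u_2}, W(p_3) = {S_1,...,S_n} ∪ Q_1 ∪ Q', W(p_4) = {S_1',...,S_n'} ∪ Q_2 and W(p_5) = {w} form a P_5-witness structure of the graph G = G(Q,S). -/

import Mathlib

/-!
Label every vertex by the index `pathIndex` of its bag. Every edge of `G` joins two
vertices of the same bag or of consecutive bags, and the edges `v u₁`, `u₁ S_j`, `S_j S_j'`,
`S_j' w` join consecutive bags, so all that is left is that each bag is connected. This is where
the colouring enters: `S_j` reaches `S_n` along `S_j, q^i_j, q_i, q^i_n, S_n` for some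
`q_i ∈ Q₁ ∩ S_j`, and `S_j'` reaches `S_n'` along `S_j', q_i, S_n'` for some `q_i ∈ Q₂ ∩ S_j`;
both paths exist because `S_n = Q`.
-/

/-- `W` is an `H`-witness structure of `G`: a family of pairwise disjoint nonempty
connected subsets of `V(G)` covering `V(G)` such that distinct `h₁ h₂` are adjacent in `H`
iff there is an edge of `G` between `W h₁` and `W h₂`. -/
def IsWitnessStructure {V U : Type*} (G : SimpleGraph V) (H : SimpleGraph U)
    (W : U → Set V) : Prop :=
  (∀ h, (W h).Nonempty) ∧
  (∀ h₁ h₂, h₁ ≠ h₂ → Disjoint (W h₁) (W h₂)) ∧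
  (⋃ h, W h) = Set.univ ∧
  (∀ h, (G.induce (W h)).Connected) ∧
  (∀ h₁ h₂, h₁ ≠ h₂ → ((∃ a ∈ W h₁, ∃ b ∈ W h₂, G.Adj a b) ↔ H.Adj h₁ h₂))

/-- `G` contains `H` as a contraction. -/
def ContainsAsContraction {V U : Type*} (G : SimpleGraph V) (H : SimpleGraph U) : Prop :=
  ∃ W : U → Set V, IsWitnessStructure G H W

/-- Raw vertex names for the graph `G(Q,S)`: elements `q_i`, hyperedges `S_j`,
copies `S_j'`, subdivision vertices `q^i_j`, and special vertices `q*`, `u₁`, `u₂`, `v`, `w`. -/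
inductive HVertex (m n : ℕ) : Type
  | elt : Fin m → HVertex m n
  | hyp : Fin n → HVertex m n
  | copy : Fin n → HVertex m n
  | sub : Fin m → Fin n → HVertex m n
  | qstar : HVertex m n
  | u1 : HVertex m n
  | u2 : HVertex m n
  | v : HVertex m n
  | w : HVertex m n

/-- A raw vertex name is an actual vertex of `G(Q,S)`: the subdivision vertex `q^i_j`
exists only when `q_i ∈ S_j`. -/
def HVertex.OK {m n : ℕ} (S : Fin n → Set (Fin m)) : HVertex m n → Prop
  | .sub i j => i ∈ S j
  | _ => True

/-- The vertex set of `G(Q,S)`. -/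
def GVertex {m n : ℕ} (S : Fin n → Set (Fin m)) : Type := {x : HVertex m n // x.OK S}

/-- The (asymmetrically listed) edges of `G(Q,S)`:
`q^i_j q_i`, `q^i_j S_j`, `q_i S_j'` (for `q_i ∈ S_j`), `S_j S_k'` (all `j,k`),
`q* u₁`, `q* u₂`, `q* q^i_j`, `u₁ S_j`, `u₂ S_j`, `u₁ v`, `u₂ v`, `w S_j'`. -/
def baseAdj {m n : ℕ} (S : Fin n → Set (Fin m)) : HVertex m n → HVertex m n → Prop
  | .sub i _, .elt i' => i = i'
  | .sub _ j, .hyp j' => j = j'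
  | .elt i, .copy j => i ∈ S j
  | .hyp _, .copy _ => True
  | .qstar, .u1 => True
  | .qstar, .u2 => True
  | .qstar, .sub _ _ => True
  | .u1, .hyp _ => True
  | .u2, .hyp _ => True
  | .u1, .v => True
  | .u2, .v => True
  | .w, .copy _ => True
  | _, _ => False

/-- The graph `G = G(Q,S)`. -/
def GQS {m n : ℕ} (S : Fin n → Set (Fin m)) : SimpleGraph (GVertex S) :=
  SimpleGraph.fromRel (fun a b => baseAdj S a.1 b.1)

/-- `(Q₁, Q₂)` is a 2-colouring of the hypergraph `(Q, S)`: a partition of `Q` such that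
every hyperedge meets both parts. -/
def IsTwoColouring {m n : ℕ} (S : Fin n → Set (Fin m)) (Q₁ Q₂ : Set (Fin m)) : Prop :=
  Q₁ ∪ Q₂ = Set.univ ∧ Disjoint Q₁ Q₂ ∧ ∀ j, (Q₁ ∩ S j).Nonempty ∧ (Q₂ ∩ S j).Nonempty

open SimpleGraph

section WitnessStructure

variable {V U : Type*} {G : SimpleGraph V}

lemma SimpleGraph.Adj.reachable_induce {s : Set V} {a b : V} (ha : a ∈ s) (hb : b ∈ s)
    (h : G.Adj a b) : (G.induce s).Reachable ⟨a, ha⟩ ⟨b, hb⟩ :=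
  Adj.reachable (G := G.induce s) h

theorem isWitnessStructure_fiber {H : SimpleGraph U} (f : V → U)
    (hconn : ∀ h, (G.induce (f ⁻¹' {h})).Connected)
    (hmap : ∀ a b, G.Adj a b → f a = f b ∨ H.Adj (f a) (f b))
    (hlift : ∀ h₁ h₂, H.Adj h₁ h₂ → ∃ a b, f a = h₁ ∧ f b = h₂ ∧ G.Adj a b) :
    IsWitnessStructure G H (fun h => f ⁻¹' {h}) := by
  refine ⟨fun h => ?_, fun h₁ h₂ hne => ?_, ?_, hconn, fun h₁ h₂ hne => ⟨?_, ?_⟩⟩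
  · obtain ⟨⟨a, ha⟩⟩ := (hconn h).nonempty
    exact ⟨a, ha⟩
  · exact Set.disjoint_singleton.2 hne |>.preimage f
  · exact Set.eq_univ_of_forall fun a => Set.mem_iUnion.2 ⟨f a, rfl⟩
  · rintro ⟨a, rfl, b, rfl, hab⟩
    exact (hmap a b hab).resolve_left hne
  · intro hadj
    obtain ⟨a, b, rfl, rfl, hab⟩ := hlift h₁ h₂ hadj
    exact ⟨a, rfl, b, rfl, hab⟩

theorem isWitnessStructure_pathGraph_fiber {N : ℕ} (f : V → Fin (N + 1))
    (hconn : ∀ k, (G.induce (f ⁻¹' {k})).Connected)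
    (hmap : ∀ a b, G.Adj a b → f a = f b ∨ (pathGraph (N + 1)).Adj (f a) (f b))
    (hstep : ∀ k : Fin N, ∃ a b, f a = k.castSucc ∧ f b = k.succ ∧ G.Adj a b) :
    IsWitnessStructure G (pathGraph (N + 1)) (fun k => f ⁻¹' {k}) := by
  refine isWitnessStructure_fiber f hconn hmap fun h₁ h₂ hadj => ?_
  rcases pathGraph_adj.1 hadj with h | h
  · obtain ⟨a, b, ha, hb, hab⟩ := hstep ⟨h₁, by omega⟩
    exact ⟨a, b, ha.trans (Fin.ext rfl), hb.trans (Fin.ext h), hab⟩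
  · obtain ⟨a, b, ha, hb, hab⟩ := hstep ⟨h₂, by omega⟩
    exact ⟨b, a, hb.trans (Fin.ext h), ha.trans (Fin.ext rfl), hab.symm⟩

end WitnessStructure

namespace GQS

variable {m n : ℕ} {S : Fin n → Set (Fin m)}

lemma baseAdj_irrefl (x : HVertex m n) : ¬ baseAdj S x x := by
  cases x <;> simp [baseAdj]

lemma adj_of_baseAdj {a b : GVertex S} (h : baseAdj S a.1 b.1) : (GQS S).Adj a b :=
  (fromRel_adj _ a b).2 ⟨by rintro rfl; exact baseAdj_irrefl _ h, Or.inl h⟩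

/-- The bag of the witness structure containing a vertex; `k : Fin 5` stands for `p_{k+1}`. -/
noncomputable def pathIndex (Q₁ : Set (Fin m)) : HVertex m n → Fin 5
  | .v => 0
  | .qstar | .u1 | .u2 => 1
  | .hyp _ | .sub _ _ => 2
  | .elt i => by classical exact if i ∈ Q₁ then 2 else 3
  | .copy _ => 3
  | .w => 4

lemma pathIndex_eq_or_adj (Q₁ : Set (Fin m)) {x y : HVertex m n} (h : baseAdj S x y) :
    pathIndex Q₁ x = pathIndex Q₁ y ∨ (pathGraph 5).Adj (pathIndex Q₁ x) (pathIndex Q₁ y) := by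
  cases x <;> cases y <;> simp only [baseAdj] at h <;> simp only [pathIndex] <;>
    (try subst h) <;> (try split_ifs) <;> simp [pathGraph_adj]

lemma pathIndex_eq_or_adj_of_adj (Q₁ : Set (Fin m)) {a b : GVertex S} (h : (GQS S).Adj a b) :
    pathIndex Q₁ a.1 = pathIndex Q₁ b.1 ∨
      (pathGraph 5).Adj (pathIndex Q₁ a.1) (pathIndex Q₁ b.1) := by
  rcases ((fromRel_adj _ a b).1 h).2 with h | h
  · exact pathIndex_eq_or_adj Q₁ h
  · exact (pathIndex_eq_or_adj Q₁ h).imp Eq.symm Adj.symm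

lemma reachable_of_baseAdj {s : Set (GVertex S)} {a b : GVertex S} (ha : a ∈ s) (hb : b ∈ s)
    (h : baseAdj S a.1 b.1) : ((GQS S).induce s).Reachable ⟨a, ha⟩ ⟨b, hb⟩ :=
  (adj_of_baseAdj h).reachable_induce ha hb

lemma connected_induce_pathIndex_two {j₀ : Fin n} (hj₀ : S j₀ = Set.univ) {Q₁ : Set (Fin m)}
    (hmeet : ∀ j, (Q₁ ∩ S j).Nonempty) :
    ((GQS S).induce ((pathIndex Q₁ ∘ Subtype.val) ⁻¹' {2})).Connected := by
  set F := (pathIndex Q₁ ∘ Subtype.val : GVertex S → Fin 5) ⁻¹' {2}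
  have mem_hyp (j : Fin n) : (⟨.hyp j, trivial⟩ : GVertex S) ∈ F := rfl
  have mem_sub (i : Fin m) (j : Fin n) (h : i ∈ S j) : (⟨.sub i j, h⟩ : GVertex S) ∈ F := rfl
  have mem_elt (i : Fin m) (hi : i ∈ Q₁) : (⟨.elt i, trivial⟩ : GVertex S) ∈ F := if_pos hi
  have elt_reach (i : Fin m) (hi : i ∈ Q₁) :
      ((GQS S).induce F).Reachable ⟨_, mem_hyp j₀⟩ ⟨_, mem_elt i hi⟩ :=
    have hi₀ : i ∈ S j₀ := hj₀ ▸ trivial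
    (reachable_of_baseAdj (mem_sub i j₀ hi₀) (mem_hyp j₀) rfl).symm.trans
      (reachable_of_baseAdj (mem_sub i j₀ hi₀) (mem_elt i hi) rfl)
  have hyp_reach (j : Fin n) : ((GQS S).induce F).Reachable ⟨_, mem_hyp j₀⟩ ⟨_, mem_hyp j⟩ := by
    obtain ⟨i, hi, hij⟩ := hmeet j
    exact (elt_reach i hi).trans <|
      (reachable_of_baseAdj (mem_sub i j hij) (mem_elt i hi) rfl).symm.trans
        (reachable_of_baseAdj (mem_sub i j hij) (mem_hyp j) rfl)
  refine (connected_iff_exists_forall_reachable _).2 ⟨⟨_, mem_hyp j₀⟩, ?_⟩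
  rintro ⟨⟨x, hx⟩, hxF⟩
  cases x with
  | hyp j => exact hyp_reach j
  | sub i j =>
    exact (hyp_reach j).trans (reachable_of_baseAdj (mem_sub i j hx) (mem_hyp j) rfl).symm
  | elt i =>
    by_cases hi : i ∈ Q₁
    · exact elt_reach i hi
    · simp [pathIndex, hi] at hxF
  | _ => simp [pathIndex] at hxF

lemma connected_induce_pathIndex_three {j₀ : Fin n} (hj₀ : S j₀ = Set.univ) {Q₁ : Set (Fin m)}
    (hmeet : ∀ j, (Q₁ᶜ ∩ S j).Nonempty) :
    ((GQS S).induce ((pathIndex Q₁ ∘ Subtype.val) ⁻¹' {3})).Connected := by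
  set F := (pathIndex Q₁ ∘ Subtype.val : GVertex S → Fin 5) ⁻¹' {3}
  have mem_copy (j : Fin n) : (⟨.copy j, trivial⟩ : GVertex S) ∈ F := rfl
  have mem_elt (i : Fin m) (hi : i ∉ Q₁) : (⟨.elt i, trivial⟩ : GVertex S) ∈ F := if_neg hi
  have elt_reach (i : Fin m) (hi : i ∉ Q₁) :
      ((GQS S).induce F).Reachable ⟨_, mem_copy j₀⟩ ⟨_, mem_elt i hi⟩ :=
    (reachable_of_baseAdj (mem_elt i hi) (mem_copy j₀) (hj₀ ▸ trivial : i ∈ S j₀)).symm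
  refine (connected_iff_exists_forall_reachable _).2 ⟨⟨_, mem_copy j₀⟩, ?_⟩
  rintro ⟨⟨x, hx⟩, hxF⟩
  cases x with
  | copy j =>
    obtain ⟨i, hi, hij⟩ := hmeet j
    exact (elt_reach i hi).trans (reachable_of_baseAdj (mem_elt i hi) (mem_copy j) hij)
  | elt i =>
    by_cases hi : i ∈ Q₁
    · simp [pathIndex, hi] at hxF
    · exact elt_reach i hi
  | _ => simp [pathIndex] at hxF

lemma connected_induce_pathIndex {j₀ : Fin n} (hj₀ : S j₀ = Set.univ) {Q₁ : Set (Fin m)}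
    (hmeet : ∀ j, (Q₁ ∩ S j).Nonempty ∧ (Q₁ᶜ ∩ S j).Nonempty) (k : Fin 5) :
    ((GQS S).induce ((pathIndex Q₁ ∘ Subtype.val) ⁻¹' {k})).Connected := by
  fin_cases k
  · refine (connected_iff_exists_forall_reachable _).2 ⟨⟨⟨.v, trivial⟩, rfl⟩, ?_⟩
    rintro ⟨⟨x, hx⟩, hxF⟩
    cases x <;> simp [pathIndex, ite_eq_iff] at hxF
    rfl
  · have mem_qstar :
        (⟨.qstar, trivial⟩ : GVertex S) ∈ (pathIndex Q₁ ∘ Subtype.val) ⁻¹' {1} := rfl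
    refine (connected_iff_exists_forall_reachable _).2 ⟨⟨_, mem_qstar⟩, ?_⟩
    rintro ⟨⟨x, hx⟩, hxF⟩
    cases x <;> simp [pathIndex, ite_eq_iff] at hxF
    · rfl
    · exact reachable_of_baseAdj mem_qstar rfl trivial
    · exact reachable_of_baseAdj mem_qstar rfl trivial
  · exact connected_induce_pathIndex_two hj₀ fun j => (hmeet j).1
  · exact connected_induce_pathIndex_three hj₀ fun j => (hmeet j).2
  · refine (connected_iff_exists_forall_reachable _).2 ⟨⟨⟨.w, trivial⟩, rfl⟩, ?_⟩
    rintro ⟨⟨x, hx⟩, hxF⟩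
    cases x <;> simp [pathIndex, ite_eq_iff] at hxF
    rfl

lemma exists_adj_pathIndex_succ (Q₁ : Set (Fin m)) (j : Fin n) (k : Fin 4) :
    ∃ a b : GVertex S,
      pathIndex Q₁ a.1 = k.castSucc ∧ pathIndex Q₁ b.1 = k.succ ∧ (GQS S).Adj a b := by
  fin_cases k
  · exact ⟨⟨.v, trivial⟩, ⟨.u1, trivial⟩, rfl, rfl, Adj.symm (adj_of_baseAdj trivial)⟩
  · exact ⟨⟨.u1, trivial⟩, ⟨.hyp j, trivial⟩, rfl, rfl, adj_of_baseAdj trivial⟩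
  · exact ⟨⟨.hyp j, trivial⟩, ⟨.copy j, trivial⟩, rfl, rfl, adj_of_baseAdj trivial⟩
  · exact ⟨⟨.copy j, trivial⟩, ⟨.w, trivial⟩, rfl, rfl, Adj.symm (adj_of_baseAdj trivial)⟩

lemma mem_singleton_mk_iff {z : GVertex S} {x : HVertex m n} (hx : x.OK S) :
    z ∈ ({⟨x, hx⟩} : Set (GVertex S)) ↔ z.1 = x :=
  Set.mem_singleton_iff.trans Subtype.ext_iff

lemma witnessSets_eq_fiber (Q₁ : Set (Fin m)) :
    ![ {(⟨.v, trivial⟩ : GVertex S)},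
       {z : GVertex S | z.1 = .qstar ∨ z.1 = .u1 ∨ z.1 = .u2},
       {z : GVertex S | (∃ j, z.1 = .hyp j) ∨ (∃ i ∈ Q₁, z.1 = .elt i) ∨
          (∃ i j, z.1 = .sub i j)},
       {z : GVertex S | (∃ j, z.1 = .copy j) ∨ (∃ i ∈ Q₁ᶜ, z.1 = .elt i)},
       {(⟨.w, trivial⟩ : GVertex S)} ] =
      fun k => (pathIndex Q₁ ∘ Subtype.val) ⁻¹' {k} := by
  funext k
  ext z
  change _ ↔ pathIndex Q₁ z.1 = k
  fin_cases k
  all_goals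
    simp only [Fin.zero_eta, Fin.mk_one, Fin.reduceFinMk, Matrix.cons_val,
      Set.mem_ofPred_eq]
    try refine (mem_singleton_mk_iff _).trans ?_
    generalize z.1 = x
    cases x <;> simp [pathIndex, ite_eq_iff]

end GQS

theorem stmt_9 {m n : ℕ} (S : Fin n → Set (Fin m)) (hn : 2 ≤ n)
    (hSlast : S ⟨n - 1, by omega⟩ = Set.univ) (Q₁ Q₂ : Set (Fin m))
    (hcol : IsTwoColouring S Q₁ Q₂) :
    IsWitnessStructure (GQS S) (SimpleGraph.pathGraph 5)
      ![ {(⟨.v, trivial⟩ : GVertex S)},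
         {z : GVertex S | z.1 = .qstar ∨ z.1 = .u1 ∨ z.1 = .u2},
         {z : GVertex S | (∃ j, z.1 = .hyp j) ∨ (∃ i ∈ Q₁, z.1 = .elt i) ∨
            (∃ i j, z.1 = .sub i j)},
         {z : GVertex S | (∃ j, z.1 = .copy j) ∨ (∃ i ∈ Q₂, z.1 = .elt i)},
         {(⟨.w, trivial⟩ : GVertex S)} ] := by
  obtain ⟨hunion, hdisj, hmeet⟩ := hcol
  obtain rfl : Q₂ = Q₁ᶜ := (isCompl_iff.2 ⟨hdisj, codisjoint_iff.2 hunion⟩).compl_eq.symm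
  rw [GQS.witnessSets_eq_fiber]
  exact isWitnessStructure_pathGraph_fiber _ (GQS.connected_induce_pathIndex hSlast hmeet)
    (fun _ _ => GQS.pathIndex_eq_or_adj_of_adj Q₁)
    (GQS.exists_adj_pathIndex_succ Q₁ ⟨n - 1, by omega⟩)
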